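/- Fix η > 0, ν ∈ ℝ, δ > 0, τ > 0. A point (A, ζ̃) with A > 0 satisfies h₁(A,ζ̃) = h₂(A,ζ̃) = 0 if and only if (η/8)A²(1 − A²) = δ and ζ̃ = ν + δ + (η/8)A². Such nontrivial equilibria exist if and only if δ ≤ η/32, in which case their ζ̃-coordinates are exactly ζ̃ = ν + δ + (η ± √(η² − 32ηδ))/16; and when δ = η/32 there is exactly one such equilibrium, with A = 1/√2 and ζ̃ = ν + 3η/32 (a saddle-node bifurcation). -/
import Mathlib

noncomputable def h₁ (ν η A ζt : ℝ) : ℝ :=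
  (1 / 2) * (ν - ζt) * A + (η / 8) * A ^ 3 - (η / 16) * A ^ 5

noncomputable def h₂ (ν η δ τ A ζt : ℝ) : ℝ :=
  τ⁻¹ * (-ζt + δ + ν + (η / 8) * A ^ 2)

lemma key (η ν δ τ : ℝ) (hη : 0 < η) (hδ : 0 < δ) (hτ : 0 < τ)
    (A ζt : ℝ) (hA : 0 < A) :
    h₁ ν η A ζt = 0 ∧ h₂ ν η δ τ A ζt = 0 ↔
      (η / 8) * A ^ 2 * (1 - A ^ 2) = δ ∧ ζt = ν + δ + (η / 8) * A ^ 2 := by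
  have hτ' : τ⁻¹ ≠ 0 := inv_ne_zero hτ.ne'
  constructor
  · rintro ⟨h1, h2⟩
    have hE : -ζt + δ + ν + (η / 8) * A ^ 2 = 0 := by
      rcases mul_eq_zero.mp h2 with h | h
      · exact absurd h hτ'
      · exact h
    have hz : ζt = ν + δ + (η / 8) * A ^ 2 := by linarith
    refine ⟨?_, hz⟩
    have h1' : A * ((η / 8) * A ^ 2 * (1 - A ^ 2) - δ) / 2 = 0 := by
      rw [hz] at h1
      unfold h₁ at h1
      linear_combination h1
    have := (div_eq_zero_iff.mp h1')
    rcases this with h | h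
    · rcases mul_eq_zero.mp h with h | h
      · exact absurd h hA.ne'
      · linarith
    · norm_num at h
  · rintro ⟨hde, hz⟩
    constructor
    · unfold h₁
      rw [hz]
      linear_combination (A / 2) * hde
    · unfold h₂
      rw [hz]
      ring

lemma key2 (η ν δ τ : ℝ) (hη : 0 < η) (hδ : 0 < δ) (hτ : 0 < τ)
    (hle : δ ≤ η / 32) :
    {ζt : ℝ | ∃ A : ℝ, 0 < A ∧ h₁ ν η A ζt = 0 ∧ h₂ ν η δ τ A ζt = 0} =
      {ν + δ + (η + Real.sqrt (η ^ 2 - 32 * η * δ)) / 16,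
       ν + δ + (η - Real.sqrt (η ^ 2 - 32 * η * δ)) / 16} := by
  set s := Real.sqrt (η ^ 2 - 32 * η * δ) with hs
  have hnn : (0:ℝ) ≤ η ^ 2 - 32 * η * δ := by nlinarith
  have hs2 : s ^ 2 = η ^ 2 - 32 * η * δ := Real.sq_sqrt hnn
  have hs0 : 0 ≤ s := Real.sqrt_nonneg _
  have hsη : s < η := by nlinarith
  ext ζt
  simp only [Set.mem_setOf_eq, Set.mem_insert_iff, Set.mem_singleton_iff]
  constructor
  · rintro ⟨A, hA, heq⟩
    obtain ⟨hde, hz⟩ := (key η ν δ τ hη hδ hτ A ζt hA).mp heq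
    have hprod : (η * A ^ 2 - (η + s) / 2) * (η * A ^ 2 - (η - s) / 2) = 0 := by
      linear_combination (-8 * η) * hde - (1/4) * hs2
    rcases mul_eq_zero.mp hprod with h | h
    · left; rw [hz]; linarith [h]
    · right; rw [hz]; linarith [h]
  · have mk : ∀ t : ℝ, 0 < t → (η/8) * (t/(2*η)) * (1 - t/(2*η)) = δ →
        ∃ A : ℝ, 0 < A ∧ h₁ ν η A (ν + δ + (η/8) * (t/(2*η))) = 0 ∧
          h₂ ν η δ τ A (ν + δ + (η/8) * (t/(2*η))) = 0 := by
      intro t ht hdt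
      refine ⟨Real.sqrt (t / (2*η)), Real.sqrt_pos.mpr (by positivity), ?_⟩
      have hA2 : (Real.sqrt (t / (2*η))) ^ 2 = t / (2*η) :=
        Real.sq_sqrt (by positivity)
      have := (key η ν δ τ hη hδ hτ (Real.sqrt (t / (2*η)))
        (ν + δ + (η/8) * (t/(2*η))) (Real.sqrt_pos.mpr (by positivity))).mpr
      apply this
      rw [hA2]
      exact ⟨hdt, rfl⟩
    rintro (h | h)
    · have := mk (η + s) (by linarith)
        (by field_simp; nlinarith [hs2])
      obtain ⟨A, hA, h1, h2⟩ := this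
      refine ⟨A, hA, ?_, ?_⟩
      · convert h1 using 2
        rw [h]; field_simp; ring
      · convert h2 using 2
        rw [h]; field_simp; ring
    · have := mk (η - s) (by linarith)
        (by field_simp; nlinarith [hs2])
      obtain ⟨A, hA, h1, h2⟩ := this
      refine ⟨A, hA, ?_, ?_⟩
      · convert h1 using 2
        rw [h]; field_simp; ring
      · convert h2 using 2
        rw [h]; field_simp; ring

/-- Characterization of the nontrivial equilibria of the coupled amplitude–damping
dynamics in the large-damping limit: they exist iff `δ ≤ η/32`, with the stated
`ζ̃`-coordinates, and at `δ = η/32` there is exactly one (the saddle-node), with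
`A = 1/√2` and `ζ̃ = ν + 3η/32`. -/
theorem stmt_15 (η ν δ τ : ℝ) (hη : 0 < η) (hδ : 0 < δ) (hτ : 0 < τ) :
    (∀ A ζt : ℝ, 0 < A →
      (h₁ ν η A ζt = 0 ∧ h₂ ν η δ τ A ζt = 0 ↔
        (η / 8) * A ^ 2 * (1 - A ^ 2) = δ ∧ ζt = ν + δ + (η / 8) * A ^ 2)) ∧
    ((∃ A ζt : ℝ, 0 < A ∧ h₁ ν η A ζt = 0 ∧ h₂ ν η δ τ A ζt = 0) ↔ δ ≤ η / 32) ∧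
    (δ ≤ η / 32 →
      {ζt : ℝ | ∃ A : ℝ, 0 < A ∧ h₁ ν η A ζt = 0 ∧ h₂ ν η δ τ A ζt = 0} =
        {ν + δ + (η + Real.sqrt (η ^ 2 - 32 * η * δ)) / 16,
         ν + δ + (η - Real.sqrt (η ^ 2 - 32 * η * δ)) / 16}) ∧
    (δ = η / 32 →
      ∀ A ζt : ℝ,
        (0 < A ∧ h₁ ν η A ζt = 0 ∧ h₂ ν η δ τ A ζt = 0) ↔
          (A = 1 / Real.sqrt 2 ∧ ζt = ν + 3 * η / 32)) := by
  refine ⟨fun A ζt hA => key η ν δ τ hη hδ hτ A ζt hA, ?_, key2 η ν δ τ hη hδ hτ, ?_⟩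
  · constructor
    · rintro ⟨A, ζt, hA, heq⟩
      obtain ⟨hde, _⟩ := (key η ν δ τ hη hδ hτ A ζt hA).mp heq
      nlinarith [sq_nonneg (A ^ 2 - 1/2)]
    · intro hle
      have h := key2 η ν δ τ hη hδ hτ hle
      have : (ν + δ + (η + Real.sqrt (η ^ 2 - 32 * η * δ)) / 16) ∈
          {ζt : ℝ | ∃ A : ℝ, 0 < A ∧ h₁ ν η A ζt = 0 ∧ h₂ ν η δ τ A ζt = 0} := by
        rw [h]; left; rfl
      obtain ⟨A, hA, h1, h2⟩ := this
      exact ⟨A, _, hA, h1, h2⟩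
  · intro hδη A ζt
    have h2pos : (0:ℝ) < Real.sqrt 2 := Real.sqrt_pos.mpr (by norm_num)
    have hsq : (1 / Real.sqrt 2) ^ 2 = 1 / 2 := by
      rw [div_pow, one_pow, Real.sq_sqrt (by norm_num : (0:ℝ) ≤ 2)]
    constructor
    · rintro ⟨hA, heq⟩
      obtain ⟨hde, hz⟩ := (key η ν δ τ hη hδ hτ A ζt hA).mp heq
      have hA2 : A ^ 2 = 1 / 2 := by
        have h' : η * (A ^ 2 - 1/2) ^ 2 = 0 := by
          rw [hδη] at hde; linear_combination (-8) * hde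
        have h'' : (A ^ 2 - 1/2) ^ 2 = 0 := by
          rcases mul_eq_zero.mp h' with h | h
          · exact absurd h hη.ne'
          · exact h
        have := pow_eq_zero_iff (n := 2) (by norm_num) |>.mp h''
        linarith
      have hAval : A = 1 / Real.sqrt 2 := by
        have hA' : A = Real.sqrt (A ^ 2) := (Real.sqrt_sq hA.le).symm
        rw [hA', hA2, show (1:ℝ)/2 = 2⁻¹ from by norm_num, Real.sqrt_inv, one_div]
      refine ⟨hAval, ?_⟩
      rw [hz, hA2, hδη]; ring
    · rintro ⟨hA, hz⟩
      have hApos : 0 < A := by rw [hA]; positivity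
      refine ⟨hApos, (key η ν δ τ hη hδ hτ A ζt hApos).mpr ⟨?_, ?_⟩⟩
      · rw [hA, hsq, hδη]; ring
      · rw [hA, hsq, hz, hδη]; ring
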